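/- A proof-term t of A from x₁:A₁,…,x_n:A_n is valid in the E-phase model (D_E, *) (i.e., t[x₁:=t₁,…,x_n:=t_n] ∈ A* for all closed t_i ∈ A_i*) if and only if t is E-valid in proof-theoretic semantics. -/
import Mathlib


namespace ILat

/-- Formulas of ILat: atoms, implication, and (atomic) second-order universal
quantification over propositional atoms. Atoms are named by natural numbers. -/
inductive Formula : Type
  | atom : ℕ → Formula
  | arrow : Formula → Formula → Formula
  | all : ℕ → Formula → Formula
deriving DecidableEq

/-- Terms of ILat: term-variables, a term-constant `c^A` for each formula `A`,
λ-abstraction, application, Λ-abstraction over atoms, and application to an atom. -/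
inductive Term : Type
  | var : ℕ → Term
  | const : Formula → Term
  | lam : ℕ → Term → Term
  | app : Term → Term → Term
  | tlam : ℕ → Term → Term
  | tapp : Term → ℕ → Term
deriving DecidableEq

/-- Free propositional atoms of a formula. -/
def Formula.fv : Formula → Finset ℕ
  | .atom X => {X}
  | .arrow A B => A.fv ∪ B.fv
  | .all X A => A.fv.erase X

/-- Substitution `A[X := Y]` of an atom `Y` for an atom `X` in a formula. -/
def Formula.substAtom : Formula → ℕ → ℕ → Formula
  | .atom Z, X, Y => if Z = X then .atom Y else .atom Z
  | .arrow A B, X, Y => .arrow (A.substAtom X Y) (B.substAtom X Y)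
  | .all Z A, X, Y => if Z = X then .all Z A else .all Z (A.substAtom X Y)

/-- Size of a formula (used as a termination measure). -/
def Formula.size : Formula → ℕ
  | .atom _ => 1
  | .arrow A B => A.size + B.size + 1
  | .all _ A => A.size + 1

theorem Formula.substAtom_size (A : Formula) (X Y : ℕ) :
    (A.substAtom X Y).size = A.size := by
  induction A with
  | atom Z => simp only [Formula.substAtom]; split <;> rfl
  | arrow B C ihB ihC => simp [Formula.substAtom, Formula.size, ihB, ihC]
  | all Z B ih => simp only [Formula.substAtom]; split <;> simp [Formula.size, ih]

/-- Simultaneous (parallel) substitution of terms for free term-variables,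
according to a partial environment `σ`. -/
def Term.msubst (σ : ℕ → Option Term) : Term → Term
  | .var x => (σ x).getD (.var x)
  | .const A => .const A
  | .lam x t => .lam x (t.msubst (fun y => if y = x then none else σ y))
  | .app t s => .app (t.msubst σ) (s.msubst σ)
  | .tlam X t => .tlam X (t.msubst σ)
  | .tapp t Y => .tapp (t.msubst σ) Y

/-- Substitution `t[x := s]` of a term for a free term-variable. -/
def Term.substV (t : Term) (x : ℕ) (s : Term) : Term :=
  t.msubst (fun y => if y = x then some s else none)

/-- Substitution `t[X := Y]` of an atom for a free propositional atom in a term. -/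
def Term.substA : Term → ℕ → ℕ → Term
  | .var x, _, _ => .var x
  | .const A, X, Y => .const (A.substAtom X Y)
  | .lam x t, X, Y => .lam x (t.substA X Y)
  | .app t s, X, Y => .app (t.substA X Y) (s.substA X Y)
  | .tlam Z t, X, Y => if Z = X then .tlam Z t else .tlam Z (t.substA X Y)
  | .tapp t Z, X, Y => .tapp (t.substA X Y) (if Z = X then Y else Z)

/-- Free term-variables of a term. -/
def Term.tfv : Term → Finset ℕ
  | .var x => {x}
  | .const _ => ∅
  | .lam x t => t.tfv.erase x
  | .app t s => t.tfv ∪ s.tfv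
  | .tlam _ t => t.tfv
  | .tapp t _ => t.tfv

/-- Free propositional atoms of a term. -/
def Term.afv : Term → Finset ℕ
  | .var _ => ∅
  | .const A => A.fv
  | .lam _ t => t.afv
  | .app t s => t.afv ∪ s.afv
  | .tlam X t => t.afv.erase X
  | .tapp t Y => insert Y t.afv

/-- A term is closed if it has no free term-variables. -/
def Closed (t : Term) : Prop := t.tfv = ∅

/-- One-step β-reduction, closed under all term-forming contexts. -/
inductive Step : Term → Term → Prop
  | beta (x : ℕ) (t s : Term) : Step (.app (.lam x t) s) (t.substV x s)
  | tbeta (X : ℕ) (t : Term) (Y : ℕ) : Step (.tapp (.tlam X t) Y) (t.substA X Y)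
  | appL {t t' : Term} (s : Term) : Step t t' → Step (.app t s) (.app t' s)
  | appR (t : Term) {s s' : Term} : Step s s' → Step (.app t s) (.app t s')
  | lam (x : ℕ) {t t' : Term} : Step t t' → Step (.lam x t) (.lam x t')
  | tlam (X : ℕ) {t t' : Term} : Step t t' → Step (.tlam X t) (.tlam X t')
  | tapp {t t' : Term} (Y : ℕ) : Step t t' → Step (.tapp t Y) (.tapp t' Y)

/-- Multi-step β-reduction `t ↠ s`: the reflexive-transitive closure of `Step`. -/
def Red : Term → Term → Prop := Relation.ReflTransGen Step

/-- A term is normal if it contains no β-redex, i.e. no reduction step applies. -/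
def Normal (t : Term) : Prop := ∀ s, ¬ Step t s

/-- A context is a finite list of statements `x : A`. -/
abbrev Ctx := List (ℕ × Formula)

/-- The typing (derivability) relation `Γ ⊢ t : A` of ILat. -/
inductive Der : Ctx → Term → Formula → Prop
  | ax {Γ : Ctx} {x : ℕ} {A : Formula} : (x, A) ∈ Γ → Der Γ (.var x) A
  | axc {Γ : Ctx} (A : Formula) : Der Γ (.const A) A
  | arrI {Γ : Ctx} {x : ℕ} {A B : Formula} {t : Term} :
      Der ((x, A) :: Γ) t B → Der Γ (.lam x t) (.arrow A B)
  | arrE {Γ : Ctx} {A B : Formula} {t s : Term} :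
      Der Γ t (.arrow A B) → Der Γ s A → Der Γ (.app t s) B
  | allI {Γ : Ctx} {X : ℕ} {A : Formula} {t : Term} :
      Der Γ t A → (∀ p ∈ Γ, X ∉ (Prod.snd p).fv) → Der Γ (.tlam X t) (.all X A)
  | allE {Γ : Ctx} {X : ℕ} {A : Formula} {t : Term} (Y : ℕ) :
      Der Γ t (.all X A) → Der Γ (.tapp t Y) (A.substAtom X Y)

/-- An argument of a spine: either a term or an atom. -/
inductive Arg : Type
  | tm : Term → Arg
  | atom : ℕ → Arg

/-- Apply a term to a single argument. -/
def Term.applyArg : Term → Arg → Term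
  | t, .tm s => .app t s
  | t, .atom Y => .tapp t Y

/-- Apply a term to a list of arguments `T₁ ⋯ T_k`. -/
def Term.applyArgs (t : Term) (l : List Arg) : Term := l.foldl Term.applyArg t

/-- A set `α` of pairs `(m ▷ t)` is a closed set of a phase space over the
idempotent commutative monoid `M`: it satisfies Monotonicity and both Expansion
conditions. -/
def IsClosedSet {M : Type*} [CommMonoid M] (α : Set (M × Term)) : Prop :=
  (∀ (m : M) (t : Term) (n : M), (m, t) ∈ α → (m * n, t) ∈ α) ∧
  (∀ (m : M) (x : ℕ) (t s : Term) (args : List Arg),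
     (m, Term.applyArgs (t.substV x s) args) ∈ α →
     (m, Term.applyArgs (.app (.lam x t) s) args) ∈ α) ∧
  (∀ (m : M) (X : ℕ) (t : Term) (Y : ℕ) (args : List Arg),
     (m, Term.applyArgs (t.substA X Y) args) ∈ α →
     (m, Term.applyArgs (.tapp (.tlam X t) Y) args) ∈ α)

/-- A phase model over an idempotent commutative monoid `M`: an interpretation of
formulas as subsets of `M × Term` such that atoms are interpreted by closed sets,
`→` and `∀` are interpreted via the corresponding elimination rules, and
`(ε ▷ c^A) ∈ A*` for every formula `A`. -/
structure PhaseModel (M : Type*) [CommMonoid M] where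
  idem : ∀ m : M, m * m = m
  interp : Formula → Set (M × Term)
  atom_closed : ∀ X : ℕ, IsClosedSet (interp (.atom X))
  interp_arrow : ∀ A B : Formula,
    interp (.arrow A B) =
      { p | ∀ q ∈ interp A, (p.1 * q.1, Term.app p.2 q.2) ∈ interp B }
  interp_all : ∀ (X : ℕ) (A : Formula),
    interp (.all X A) =
      { p | ∀ Y : ℕ, (p.1, Term.tapp p.2 Y) ∈ interp (A.substAtom X Y) }
  const_mem : ∀ A : Formula, ((1 : M), Term.const A) ∈ interp A

/-- The substitution environment sending each `xᵢ` to `tᵢ`. -/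
def envOf (xs : List ℕ) (ts : List Term) : ℕ → Option Term :=
  fun x => (xs.zip ts).lookup x

/-- Validity in a phase model: a term `t` of `A` from `x₁:A₁, …, x_k:A_k` is valid
iff `(m₁⋯m_k ▷ t[x₁:=t₁,…,x_k:=t_k]) ∈ A*` for all `(mᵢ ▷ tᵢ) ∈ Aᵢ*`. -/
def PhaseModel.Valid {M : Type*} [CommMonoid M] (Mo : PhaseModel M)
    (Γ : Ctx) (t : Term) (A : Formula) : Prop :=
  ∀ ms : List (M × Term),
    List.Forall₂ (fun (p : ℕ × Formula) (q : M × Term) => q ∈ Mo.interp p.2) Γ ms →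
    ((ms.map Prod.fst).prod,
      t.msubst (envOf (Γ.map Prod.fst) (ms.map Prod.snd))) ∈ Mo.interp A

/-- The Expansion closure conditions for a set of closed terms (over the trivial
one-element monoid Monotonicity is trivial). -/
def IsClosedE (α : Set Term) : Prop :=
  (∀ (x : ℕ) (t s : Term) (args : List Arg),
     Term.applyArgs (t.substV x s) args ∈ α →
     Term.applyArgs (.app (.lam x t) s) args ∈ α) ∧
  (∀ (X : ℕ) (t : Term) (Y : ℕ) (args : List Arg),
     Term.applyArgs (t.substA X Y) args ∈ α →
     Term.applyArgs (.tapp (.tlam X t) Y) args ∈ α)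

/-- `‖A‖`: the set of closed terms reducing to a normal term `s` with `⊢ s : A`. -/
def NormSet (A : Formula) : Set Term :=
  { t | Closed t ∧ ∃ s, Red t s ∧ Normal s ∧ Der [] s A }

/-- The interpretation `A*` of the E-phase structure: atoms via `‖·‖`, and `→`, `∀`
via the corresponding elimination rules. -/
def Einterp : Formula → Set Term
  | .atom X => NormSet (.atom X)
  | .arrow A B => { t | ∀ s ∈ Einterp A, Term.app t s ∈ Einterp B }
  | .all X A => { t | ∀ Y : ℕ, Term.tapp t Y ∈ Einterp (A.substAtom X Y) }
termination_by A => A.size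
decreasing_by
  all_goals simp [Formula.size, Formula.substAtom_size] <;> omega

/-- The interpretation `A†` of the I-phase structure: atoms via `‖·‖`, and `→`, `∀`
via the corresponding introduction rules (using η-expansion at the final step). -/
def Iinterp : Formula → Set Term
  | .atom X => NormSet (.atom X)
  | .arrow B C => { t | ∃ (u : Term) (x : ℕ), x ∉ u.tfv ∧ Red t u ∧
      ∀ s ∈ Iinterp B, (Term.app u (.var x)).substV x s ∈ Iinterp C }
  | .all X A => { t | ∃ u : Term, X ∉ u.afv ∧ Red t u ∧
      ∀ Y : ℕ, (Term.tapp u X).substA X Y ∈ Iinterp (A.substAtom X Y) }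
termination_by A => A.size
decreasing_by
  all_goals simp [Formula.size, Formula.substAtom_size] <;> omega

/-- An atomic base is a set of atoms `X` whose term-constants `c^X` are axioms.
`ProofTerm S t` says every term-constant occurring in `t` is some `c^X` with `X ∈ S`. -/
def ProofTerm (S : Set ℕ) : Term → Prop
  | .var _ => True
  | .const A => ∃ X ∈ S, A = .atom X
  | .lam _ t => ProofTerm S t
  | .app t s => ProofTerm S t ∧ ProofTerm S s
  | .tlam _ t => ProofTerm S t
  | .tapp t _ => ProofTerm S t

/-- qE-validity for closed terms, by induction on the formula. -/
def QEvalid : Formula → Term → Prop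
  | .atom X, t => ∃ s, Red t s ∧ Normal s ∧ Der [] s (.atom X)
  | .arrow B C, t => ∀ s : Term, Closed s → QEvalid B s → QEvalid C (.app t s)
  | .all X A, t => ∀ Y : ℕ, QEvalid (A.substAtom X Y) (.tapp t Y)
termination_by A _ => A.size
decreasing_by
  all_goals simp [Formula.size, Formula.substAtom_size] <;> omega

/-- qE-validity of an (open) term `t` of `A` from `Γ`. -/
def QEOpenValid (Γ : Ctx) (t : Term) (A : Formula) : Prop :=
  ∀ ts : List Term,
    List.Forall₂ (fun (p : ℕ × Formula) (s : Term) => Closed s ∧ QEvalid p.2 s) Γ ts →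
    QEvalid A (t.msubst (envOf (Γ.map Prod.fst) ts))

/-- E-validity: a qE-valid proof-term. -/
def EValid (S : Set ℕ) (Γ : Ctx) (t : Term) (A : Formula) : Prop :=
  ProofTerm S t ∧ QEOpenValid Γ t A

/-- Validity in the E-phase model. -/
def EPhaseValid (Γ : Ctx) (t : Term) (A : Formula) : Prop :=
  ∀ ts : List Term,
    List.Forall₂ (fun (p : ℕ × Formula) (s : Term) => Closed s ∧ s ∈ Einterp p.2) Γ ts →
    t.msubst (envOf (Γ.map Prod.fst) ts) ∈ Einterp A

/-- qI-validity for closed terms, by induction on the formula. -/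
def QIvalid : Formula → Term → Prop
  | .atom X, t => ∃ s, Red t s ∧ Normal s ∧ Der [] s (.atom X)
  | .arrow B C, t => ∃ (x : ℕ) (u : Term), Red t (.lam x u) ∧
      ∀ s : Term, Closed s → QIvalid B s → QIvalid C (u.substV x s)
  | .all X A, t => ∃ u : Term, Red t (.tlam X u) ∧
      ∀ Y : ℕ, QIvalid (A.substAtom X Y) (u.substA X Y)
termination_by A _ => A.size
decreasing_by
  all_goals simp [Formula.size, Formula.substAtom_size] <;> omega

/-- qI-validity of an (open) term `t` of `A` from `Γ`. -/
def QIOpenValid (Γ : Ctx) (t : Term) (A : Formula) : Prop :=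
  ∀ ts : List Term,
    List.Forall₂ (fun (p : ℕ × Formula) (s : Term) => Closed s ∧ QIvalid p.2 s) Γ ts →
    QIvalid A (t.msubst (envOf (Γ.map Prod.fst) ts))

/-- I-validity: a qI-valid proof-term. -/
def IValid (S : Set ℕ) (Γ : Ctx) (t : Term) (A : Formula) : Prop :=
  ProofTerm S t ∧ QIOpenValid Γ t A


/-- A canonical closed term of each formula, built from atomic constants only. -/
def dummy : Formula → Term
  | .atom X => .const (.atom X)
  | .arrow _ C => .lam 0 (dummy C)
  | .all X A => .tlam X (dummy A)

theorem dummy_tfv (A : Formula) : (dummy A).tfv = ∅ := by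
  induction A <;> simp [dummy, Term.tfv, *]

theorem msubst_eq_self (t : Term) : ∀ σ, (∀ x ∈ t.tfv, σ x = none) → t.msubst σ = t := by
  induction t with
  | var x => intro σ h; simp [Term.msubst, h x (by simp [Term.tfv])]
  | const A => intro σ h; rfl
  | lam x t ih =>
    intro σ h
    simp only [Term.msubst, Term.lam.injEq, true_and]
    apply ih
    intro y hy
    by_cases hyx : y = x
    · simp [hyx]
    · simp only [hyx, if_false]
      exact h y (by simp [Term.tfv, Finset.mem_erase, hy, hyx])
  | app t s iht ihs =>
    intro σ h
    simp only [Term.msubst, Term.app.injEq]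
    exact ⟨iht σ fun x hx => h x (by simp [Term.tfv, hx]),
           ihs σ fun x hx => h x (by simp [Term.tfv, hx])⟩
  | tlam X t ih => intro σ h; simp only [Term.msubst, Term.tlam.injEq, true_and]; exact ih σ h
  | tapp t Y ih => intro σ h; simp only [Term.msubst, Term.tapp.injEq, and_true]; exact ih σ h

theorem dummy_substV (A : Formula) (x : ℕ) (s : Term) :
    (dummy A).substV x s = dummy A := by
  apply msubst_eq_self
  intro y hy
  rw [dummy_tfv] at hy
  simp at hy

theorem dummy_substA (A : Formula) (X Y : ℕ) :
    (dummy A).substA X Y = dummy (A.substAtom X Y) := by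
  induction A with
  | atom Z => simp only [dummy, Term.substA, Formula.substAtom]; split <;> rfl
  | arrow B C ihB ihC => simp [dummy, Term.substA, Formula.substAtom, ihC]
  | all Z B ih =>
    simp only [dummy, Term.substA, Formula.substAtom]
    split <;> simp [dummy, ih]

theorem closed_app {t s : Term} : Closed (.app t s) ↔ Closed t ∧ Closed s := by
  simp [Closed, Term.tfv, Finset.union_eq_empty]

theorem closed_tapp {t : Term} {Y : ℕ} : Closed (.tapp t Y) ↔ Closed t := Iff.rfl

theorem closed_dummy (A : Formula) : Closed (dummy A) := dummy_tfv A

/-- The combined key property of the E-phase interpretation, proved by strong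
induction on formula size. -/
def PAll (A : Formula) : Prop :=
  (∀ t ∈ Einterp A, Closed t) ∧
  (dummy A ∈ Einterp A) ∧
  (∀ t t', Step t t' → Closed t → t' ∈ Einterp A → t ∈ Einterp A) ∧
  (∀ t, Closed t → (t ∈ Einterp A ↔ QEvalid A t))

theorem size_pos (A : Formula) : 0 < A.size := by
  cases A <;> simp [Formula.size]

theorem pAll : ∀ n A, A.size ≤ n → PAll A := by
  intro n
  induction n with
  | zero => intro A h; have := size_pos A; omega
  | succ n ih =>
    intro A h
    match A with
    | .atom X =>
      refine ⟨fun t ht => by rw [Einterp] at ht; exact ht.1, ?_, ?_, ?_⟩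
      · rw [Einterp]
        refine ⟨closed_dummy _, .const (.atom X), Relation.ReflTransGen.refl, ?_, Der.axc _⟩
        intro s hs
        cases hs
      · intro t t' hst hc ht'
        rw [Einterp] at ht' ⊢
        obtain ⟨_, s, hred, hn, hd⟩ := ht'
        exact ⟨hc, s, Relation.ReflTransGen.head hst hred, hn, hd⟩
      · intro t hc
        rw [Einterp, QEvalid]
        simp only [NormSet, Set.mem_setOf_eq]
        exact ⟨fun h => h.2, fun h => ⟨hc, h⟩⟩
    | .arrow B C =>
      have hB : B.size ≤ n := by simp [Formula.size] at h; omega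
      have hC : C.size ≤ n := by simp [Formula.size] at h; omega
      obtain ⟨B1, B2, B3, B4⟩ := ih B hB
      obtain ⟨C1, C2, C3, C4⟩ := ih C hC
      refine ⟨?_, ?_, ?_, ?_⟩
      · intro t ht
        rw [Einterp] at ht
        have := C1 _ (ht (dummy B) B2)
        exact (closed_app.mp this).1
      · rw [Einterp]
        intro s hs
        have hcs := B1 s hs
        have hstep : Step (.app (.lam 0 (dummy C)) s) (dummy C) := by
          have := Step.beta 0 (dummy C) s
          rwa [dummy_substV] at this
        exact C3 _ _ hstep (closed_app.mpr ⟨closed_dummy _, hcs⟩) C2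
      · intro t t' hst hc ht'
        rw [Einterp] at ht' ⊢
        intro s hs
        exact C3 _ _ (Step.appL s hst) (closed_app.mpr ⟨hc, B1 s hs⟩) (ht' s hs)
      · intro t hc
        rw [Einterp, QEvalid]
        constructor
        · intro ht s hcs hqs
          have hs : s ∈ Einterp B := (B4 s hcs).mpr hqs
          exact (C4 _ (closed_app.mpr ⟨hc, hcs⟩)).mp (ht s hs)
        · intro ht s hs
          have hcs := B1 s hs
          exact (C4 _ (closed_app.mpr ⟨hc, hcs⟩)).mpr (ht s hcs ((B4 s hcs).mp hs))
    | .all X A' =>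
      have hA : ∀ Y, (A'.substAtom X Y).size ≤ n := by
        intro Y; rw [Formula.substAtom_size]; simp [Formula.size] at h; omega
      refine ⟨?_, ?_, ?_, ?_⟩
      · intro t ht
        rw [Einterp] at ht
        exact closed_tapp.mp ((ih _ (hA X)).1 _ (ht X))
      · rw [Einterp]
        intro Y
        obtain ⟨Y1, Y2, Y3, Y4⟩ := ih _ (hA Y)
        have hstep : Step (.tapp (.tlam X (dummy A')) Y) (dummy (A'.substAtom X Y)) := by
          have := Step.tbeta X (dummy A') Y
          rwa [dummy_substA] at this
        exact Y3 _ _ hstep (closed_dummy _) Y2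
      · intro t t' hst hc ht'
        rw [Einterp] at ht' ⊢
        intro Y
        exact (ih _ (hA Y)).2.2.1 _ _ (Step.tapp Y hst) hc (ht' Y)
      · intro t hc
        rw [Einterp, QEvalid]
        constructor
        · intro ht Y
          exact ((ih _ (hA Y)).2.2.2 (t.tapp Y) (closed_tapp.mpr hc)).mp (ht Y)
        · intro ht Y
          exact ((ih _ (hA Y)).2.2.2 (t.tapp Y) (closed_tapp.mpr hc)).mpr (ht Y)

theorem einterp_iff_qE {A : Formula} {t : Term} (hc : Closed t) :
    t ∈ Einterp A ↔ QEvalid A t :=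
  (pAll A.size A le_rfl).2.2.2 t hc

theorem einterp_closed {A : Formula} {t : Term} (ht : t ∈ Einterp A) : Closed t :=
  (pAll A.size A le_rfl).1 t ht

theorem msubst_tfv_subset (t : Term) :
    ∀ (σ : ℕ → Option Term) (V : Finset ℕ),
    (∀ x ∈ t.tfv, (σ x = none → x ∈ V) ∧ (∀ s, σ x = some s → s.tfv ⊆ V)) →
    (t.msubst σ).tfv ⊆ V := by
  induction t with
  | var x =>
    intro σ V h
    have hx := h x (by simp [Term.tfv])
    cases hσ : σ x with
    | none => simp [Term.msubst, hσ, Term.tfv]; exact hx.1 hσ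
    | some s => simpa [Term.msubst, hσ] using hx.2 s hσ
  | const A => intro σ V h; simp [Term.msubst, Term.tfv]
  | lam x t ih =>
    intro σ V h
    simp only [Term.msubst, Term.tfv]
    intro y hy
    simp only [Finset.mem_erase] at hy
    have : y ∈ insert x V := by
      refine ih _ (insert x V) ?_ hy.2
      intro z hz
      by_cases hzx : z = x
      · simp [hzx]
      · simp only [hzx, if_false]
        have := h z (by simp [Term.tfv, Finset.mem_erase, hz, hzx])
        exact ⟨fun h0 => Finset.mem_insert_of_mem (this.1 h0),
          fun s hs => (this.2 s hs).trans (Finset.subset_insert _ _)⟩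
    simp only [Finset.mem_insert] at this
    exact this.resolve_left hy.1
  | app t s iht ihs =>
    intro σ V h
    simp only [Term.msubst, Term.tfv, Finset.union_subset_iff]
    exact ⟨iht _ _ fun x hx => h x (by simp [Term.tfv, hx]),
           ihs _ _ fun x hx => h x (by simp [Term.tfv, hx])⟩
  | tlam X t ih => intro σ V h; exact ih _ _ h
  | tapp t Y ih => intro σ V h; exact ih _ _ h

theorem env_lookup {P : Term → Prop} :
    ∀ {Γ : Ctx} {ts : List Term},
    List.Forall₂ (fun (p : ℕ × Formula) (s : Term) => P s) Γ ts →
    ∀ x ∈ Γ.map Prod.fst, ∃ s, envOf (Γ.map Prod.fst) ts x = some s ∧ P s := by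
  intro Γ ts h
  induction h with
  | nil => intro x hx; simp at hx
  | @cons p s Γ' ts' hp _ ihq =>
    intro x hx
    simp only [List.map_cons, List.mem_cons] at hx
    by_cases hxp : x = p.1
    · refine ⟨s, ?_, hp⟩
      simp [envOf, List.zip, List.lookup, hxp]
    · obtain ⟨s', hs', hPs'⟩ := ihq x (hx.resolve_left hxp)
      refine ⟨s', ?_, hPs'⟩
      simp only [envOf, List.map_cons, List.zip_cons_cons, List.lookup]
      have : (x == p.1) = false := by simp [hxp]
      simp only [this]
      exact hs'

theorem msubst_closed {Γ : Ctx} {ts : List Term} {t : Term}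
    (h : List.Forall₂ (fun (_ : ℕ × Formula) (s : Term) => Closed s) Γ ts)
    (hfv : t.tfv ⊆ (Γ.map Prod.fst).toFinset) :
    Closed (t.msubst (envOf (Γ.map Prod.fst) ts)) := by
  rw [Closed, ← Finset.subset_empty]
  apply msubst_tfv_subset
  intro x hx
  have hxΓ : x ∈ Γ.map Prod.fst := by
    have := hfv hx; simpa [List.mem_toFinset] using this
  obtain ⟨s, hs, hcs⟩ := env_lookup (P := Closed) h x hxΓ
  constructor
  · intro h0; rw [hs] at h0; cases h0
  · intro s' hs'
    rw [hs] at hs'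
    cases hs'
    rw [hcs]

/-- A proof-term `t` of `A` from `x₁:A₁,…,x_n:A_n` is valid in the
E-phase model `(D_E, *)` if and only if it is E-valid in proof-theoretic
semantics. -/
theorem ePhaseValid_iff_eValid (S : Set ℕ) (Γ : Ctx) (t : Term) (A : Formula)
    (hpt : ProofTerm S t) (hfv : t.tfv ⊆ (Γ.map Prod.fst).toFinset) :
    EPhaseValid Γ t A ↔ EValid S Γ t A := by
  constructor
  · intro h
    refine ⟨hpt, ?_⟩
    intro ts hts
    have hts' : List.Forall₂
        (fun (p : ℕ × Formula) (s : Term) => Closed s ∧ s ∈ Einterp p.2) Γ ts :=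
      hts.imp fun {p s} hp => ⟨hp.1, (einterp_iff_qE hp.1).mpr hp.2⟩
    have hmem := h ts hts'
    exact (einterp_iff_qE (msubst_closed (hts.imp fun _ _ hp => hp.1) hfv)).mp hmem
  · intro h ts hts
    have hts' : List.Forall₂
        (fun (p : ℕ × Formula) (s : Term) => Closed s ∧ QEvalid p.2 s) Γ ts :=
      hts.imp fun {p s} hp => ⟨hp.1, (einterp_iff_qE hp.1).mp hp.2⟩
    have hq := h.2 ts hts'
    exact (einterp_iff_qE (msubst_closed (hts.imp fun _ _ hp => hp.1) hfv)).mpr hq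

end ILat
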